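/- arXiv:2302.11356 — 3 statements merged into one kernel-verified Lean document; each statement's English description precedes it below -/
import Mathlib

section
/- Proposition 3 (TBD-PHD updater): with the unnormalized posterior weights w_n and evidence Z = Σ_{n≥0} (1/n!) ∫_{α^n} w_n dμ^n, define the posterior intensity function v_post(x) = (1/Z) · Σ_{n=1}^{∞} (1/(n−1)!) ∫_{α^{n−1}} w_n(x, y₁, …, y_{n−1}) dμ^{n−1}(y₁,…,y_{n−1}). Then for every x ∈ α, v_post(x) = L(x) · λ · π(x); that is, the updated intensity function equals the likelihood ratio times the predicted intensity, v_{k+1}(x) = 𝕃(Z_{k+1}|x) · v_{k+1|k}(x), with no clutter or detection-probability terms. -/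
open MeasureTheory

/-!
The weight `w_n` is a product over the points, so its integral against `μ^n` is
`exp(-λ) (λ ∫ Lπ dμ)^n`, and pinning one point at `x` only pulls out a factor `λ L(x) π(x)`.
Both the evidence and the numerator therefore sum to exponential series, and the common
factor `exp(-λ) exp(λ ∫ Lπ dμ)` cancels.
-/

theorem Real.tsum_one_div_factorial_mul_pow (c : ℝ) :
    ∑' n : ℕ, (1 / n.factorial : ℝ) * c ^ n = Real.exp c := by
  rw [Real.exp_eq_exp_ℝ, NormedSpace.exp_eq_tsum_div]
  exact tsum_congr fun n => by rw [one_div, inv_mul_eq_div]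

section PoissonWeights

variable {α : Type*} [MeasurableSpace α] (μ : Measure α) [SigmaFinite μ] (g : α → ℝ) (l : ℝ)

theorem integral_pi_prod_fin_cons (x : α) (m : ℕ) :
    ∫ y : Fin m → α, ∏ i, g ((Fin.cons x y : Fin (m + 1) → α) i) ∂(Measure.pi fun _ => μ) =
      g x * (∫ z, g z ∂μ) ^ m := by
  simp only [Fin.prod_univ_succ, Fin.cons_zero, Fin.cons_succ]
  rw [integral_const_mul, integral_fintype_prod_eq_pow, Fintype.card_fin]

theorem tsum_integral_poisson_weight :
    ∑' n : ℕ, (1 / n.factorial : ℝ) *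
        ∫ x : Fin n → α, Real.exp (-l) * l ^ n * ∏ i, g (x i) ∂(Measure.pi fun _ => μ) =
      Real.exp (-l) * Real.exp (l * ∫ z, g z ∂μ) := by
  have hterm : ∀ n : ℕ, (1 / n.factorial : ℝ) *
      ∫ x : Fin n → α, Real.exp (-l) * l ^ n * ∏ i, g (x i) ∂(Measure.pi fun _ => μ) =
        Real.exp (-l) * ((1 / n.factorial : ℝ) * (l * ∫ z, g z ∂μ) ^ n) := by
    intro n
    rw [integral_const_mul, integral_fintype_prod_eq_pow, Fintype.card_fin, mul_pow]
    ring
  simp_rw [hterm]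
  rw [tsum_mul_left, Real.tsum_one_div_factorial_mul_pow]

theorem tsum_integral_poisson_weight_fin_cons (x : α) :
    ∑' m : ℕ, (1 / m.factorial : ℝ) *
        ∫ y : Fin m → α, Real.exp (-l) * l ^ (m + 1) *
          ∏ i, g ((Fin.cons x y : Fin (m + 1) → α) i) ∂(Measure.pi fun _ => μ) =
      Real.exp (-l) * l * g x * Real.exp (l * ∫ z, g z ∂μ) := by
  have hterm : ∀ m : ℕ, (1 / m.factorial : ℝ) *
      ∫ y : Fin m → α, Real.exp (-l) * l ^ (m + 1) *
        ∏ i, g ((Fin.cons x y : Fin (m + 1) → α) i) ∂(Measure.pi fun _ => μ) =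
        Real.exp (-l) * l * g x * ((1 / m.factorial : ℝ) * (l * ∫ z, g z ∂μ) ^ m) := by
    intro m
    rw [integral_const_mul, integral_pi_prod_fin_cons, pow_succ, mul_pow]
    ring
  simp_rw [hterm]
  rw [tsum_mul_left, Real.tsum_one_div_factorial_mul_pow]

end PoissonWeights

theorem tbd_phd_updater_intensity_general
    {α : Type*} [MeasurableSpace α] (μ : Measure α) [SigmaFinite μ]
    (p L : α → ℝ)
    (l : ℝ)
    (w : (n : ℕ) → (Fin n → α) → ℝ)
    (hw : ∀ n (x : Fin n → α), w n x = Real.exp (-l) * l ^ n * ∏ i, L (x i) * p (x i))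
    (Z : ℝ)
    (hZ : Z = ∑' n : ℕ, (1 / n.factorial : ℝ) *
        ∫ x : Fin n → α, w n x ∂(Measure.pi fun _ : Fin n => μ))
    (vpost : α → ℝ)
    (hv : ∀ x : α, vpost x = (1 / Z) * ∑' m : ℕ, (1 / m.factorial : ℝ) *
        ∫ y : Fin m → α, w (m + 1) (Fin.cons x y) ∂(Measure.pi fun _ : Fin m => μ)) :
    ∀ x : α, vpost x = L x * (l * p x) := by
  intro x
  simp only [hv, hZ, hw]
  rw [tsum_integral_poisson_weight μ (fun z => L z * p z),
    tsum_integral_poisson_weight_fin_cons μ (fun z => L z * p z)]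
  field_simp [Real.exp_ne_zero]

/-- **Proposition 3 (TBD-PHD updater).**
With the unnormalized posterior weights
`w_n(x₁,…,x_n) = exp(−λ) · λ^n · ∏_i L(x_i)·π(x_i)` and evidence
`Z = Σ_{n≥0} (1/n!) ∫_{α^n} w_n dμ^n`, define the posterior intensity
`v_post(x) = (1/Z) · Σ_{n=1}^∞ (1/(n−1)!) ∫_{α^{n−1}} w_n(x, y₁,…,y_{n−1}) dμ^{n−1}`
(the sum over `n ≥ 1` is written via the substitution `n = m + 1`).
Then for every `x ∈ α`, `v_post(x) = L(x) · λ · π(x)`: the updated intensity equals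
the likelihood ratio times the predicted intensity, with no clutter or
detection-probability terms. -/
theorem tbd_phd_updater_intensity
    {α : Type*} [MeasurableSpace α] (μ : Measure α) [SigmaFinite μ]
    (p L : α → ℝ) (hp_meas : Measurable p) (hL_meas : Measurable L)
    (hp_nn : ∀ x, 0 ≤ p x) (hL_nn : ∀ x, 0 ≤ L x)
    (hp_dens : ∫ x, p x ∂μ = 1)
    (l : ℝ) (hl : 0 ≤ l)
    (hLp_int : Integrable (fun x => L x * p x) μ)
    (a : ℝ) (ha : a = l * ∫ x, L x * p x ∂μ)
    (w : (n : ℕ) → (Fin n → α) → ℝ)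
    (hw : ∀ n (x : Fin n → α), w n x = Real.exp (-l) * l ^ n * ∏ i, L (x i) * p (x i))
    (Z : ℝ)
    (hZ : Z = ∑' n : ℕ, (1 / n.factorial : ℝ) *
        ∫ x : Fin n → α, w n x ∂(Measure.pi fun _ : Fin n => μ))
    (vpost : α → ℝ)
    (hv : ∀ x : α, vpost x = (1 / Z) * ∑' m : ℕ, (1 / m.factorial : ℝ) *
        ∫ y : Fin m → α, w (m + 1) (Fin.cons x y) ∂(Measure.pi fun _ : Fin m => μ)) :
    ∀ x : α, vpost x = L x * (l * p x) :=
  tbd_phd_updater_intensity_general μ p L l w hw Z hZ vpost hv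
end

section
/- Proposition 4 (updated cardinality distribution of the TBD-PHD filter): with the unnormalized posterior weights w_n and evidence Z = Σ_{m≥0} (1/m!) ∫_{α^m} w_m dμ^m, define the posterior cardinality distribution ρ_post(n) = (1/Z) · (1/n!) ∫_{α^n} w_n dμ^n. Then for every n ∈ ℕ, ρ_post(n) = exp(−a) · a^n / n! where a = λ ∫_α L·π dμ = ⟨𝕃(Z_{k+1}|·), v_{k+1|k}(·)⟩; that is, the posterior cardinality distribution is Poisson with parameter ⟨L, v⟩, so the Poisson prior cardinality distribution is conjugate to any separable likelihood. -/
open MeasureTheory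

/-!
The integrand `w_n` is a constant times a product of one-point functions, so by Fubini its
integral over `αⁿ` is `exp(−λ) (λ ∫ L π dμ)ⁿ = exp(−λ) aⁿ`. The cardinality weights are
therefore proportional to `aⁿ / n!`, and normalizing them by their sum `exp(−λ) exp a` gives
the Poisson distribution with parameter `a`.
-/

open Nat Real

theorem Real.tsum_pow_div_factorial (a : ℝ) : ∑' n : ℕ, a ^ n / n ! = exp a := by
  rw [exp_eq_exp_ℝ, NormedSpace.exp_eq_tsum_div]

theorem normalize_const_mul_pow_eq_poisson {c : ℝ} (hc : c ≠ 0) (a : ℝ) (n : ℕ) :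
    1 / (∑' m : ℕ, 1 / m ! * (c * a ^ m)) * (1 / n ! * (c * a ^ n)) =
      exp (-a) * a ^ n / n ! := by
  have hsum : ∑' m : ℕ, 1 / m ! * (c * a ^ m) = c * exp a := by
    rw [← Real.tsum_pow_div_factorial, ← tsum_mul_left]
    congr 1 with m
    ring
  have hfact : (n ! : ℝ) ≠ 0 := Nat.cast_ne_zero.mpr n.factorial_ne_zero
  rw [hsum, exp_neg]
  field_simp

theorem tbd_phd_updated_cardinality_general
    {α : Type*} [MeasurableSpace α] (μ : Measure α) [SigmaFinite μ]
    (p L : α → ℝ)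
    (l : ℝ)
    (a : ℝ) (ha : a = l * ∫ x, L x * p x ∂μ)
    (w : (n : ℕ) → (Fin n → α) → ℝ)
    (hw : ∀ n (x : Fin n → α), w n x = Real.exp (-l) * l ^ n * ∏ i, L (x i) * p (x i))
    (Z : ℝ)
    (hZ : Z = ∑' m : ℕ, (1 / m.factorial : ℝ) *
        ∫ x : Fin m → α, w m x ∂(Measure.pi fun _ : Fin m => μ))
    (ρpost : ℕ → ℝ)
    (hρ : ∀ n : ℕ, ρpost n = (1 / Z) * ((1 / n.factorial : ℝ) *
        ∫ x : Fin n → α, w n x ∂(Measure.pi fun _ : Fin n => μ))) :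
    ∀ n : ℕ, ρpost n = Real.exp (-a) * a ^ n / n.factorial := by
  have hweight :
      ∀ n, ∫ x : Fin n → α, w n x ∂(Measure.pi fun _ => μ) = exp (-l) * a ^ n := by
    intro n
    simp_rw [hw]
    rw [integral_const_mul, integral_fintype_prod_eq_pow (fun y => L y * p y),
      Fintype.card_fin, ha, mul_pow, mul_assoc]
  intro n
  rw [hρ, hZ]
  simp_rw [hweight]
  exact normalize_const_mul_pow_eq_poisson (exp_ne_zero _) a n

/-- **Proposition 4 (updated cardinality distribution of the TBD-PHD filter).**
With the unnormalized posterior weights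
`w_n(x₁,…,x_n) = exp(−λ) · λ^n · ∏_i L(x_i)·π(x_i)` and evidence
`Z = Σ_{m≥0} (1/m!) ∫_{α^m} w_m dμ^m`, define the posterior cardinality
distribution `ρ_post(n) = (1/Z) · (1/n!) ∫_{α^n} w_n dμ^n`.  Then for every `n`,
`ρ_post(n) = exp(−a) · a^n / n!` where `a = λ ∫ L·π dμ = ⟨L, v⟩`: the posterior
cardinality distribution is Poisson with parameter `⟨L, v⟩`, so the Poisson prior
cardinality distribution is conjugate to any separable likelihood. -/
theorem tbd_phd_updated_cardinality
    {α : Type*} [MeasurableSpace α] (μ : Measure α) [SigmaFinite μ]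
    (p L : α → ℝ) (hp_meas : Measurable p) (hL_meas : Measurable L)
    (hp_nn : ∀ x, 0 ≤ p x) (hL_nn : ∀ x, 0 ≤ L x)
    (hp_dens : ∫ x, p x ∂μ = 1)
    (l : ℝ) (hl : 0 ≤ l)
    (hLp_int : Integrable (fun x => L x * p x) μ)
    (a : ℝ) (ha : a = l * ∫ x, L x * p x ∂μ)
    (w : (n : ℕ) → (Fin n → α) → ℝ)
    (hw : ∀ n (x : Fin n → α), w n x = Real.exp (-l) * l ^ n * ∏ i, L (x i) * p (x i))
    (Z : ℝ)
    (hZ : Z = ∑' m : ℕ, (1 / m.factorial : ℝ) *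
        ∫ x : Fin m → α, w m x ∂(Measure.pi fun _ : Fin m => μ))
    (ρpost : ℕ → ℝ)
    (hρ : ∀ n : ℕ, ρpost n = (1 / Z) * ((1 / n.factorial : ℝ) *
        ∫ x : Fin n → α, w n x ∂(Measure.pi fun _ : Fin n => μ))) :
    ∀ n : ℕ, ρpost n = Real.exp (-a) * a ^ n / n.factorial :=
  tbd_phd_updated_cardinality_general μ p L l a ha w hw Z hZ ρpost hρ
end

section
/- Poisson conjugacy of the full posterior multi-target density: with the unnormalized posterior weights w_n and evidence Z = Σ_{m≥0} (1/m!) ∫_{α^m} w_m dμ^m, for every n ∈ ℕ and every (x₁,…,x_n) ∈ α^n one has w_n(x₁,…,x_n)/Z = exp(−a) · ∏_{i=1}^{n} ( λ · L(x_i) · π(x_i) ), where a = λ ∫_α L·π dμ. That is, the normalized posterior multi-target density is exactly the density of a Poisson random finite set with intensity function x ↦ L(x)·λ·π(x): the Poisson prior is conjugate under the separable TBD likelihood, and the posterior is again Poisson with intensity L·v. -/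
open scoped BigOperators
open MeasureTheory

/-!
Integrating the `m`-point weight `c ^ m ∏ f (xᵢ)` against `μ^m` gives `(c ∫ f dμ) ^ m` by Fubini,
so the evidence is the exponential series: `Z = exp (-λ) · exp a`. Dividing `w_n` by `Z` cancels
`exp (-λ)` and leaves `exp (-a) ∏ λ L(xᵢ) π(xᵢ)`, the Poisson density with intensity `λ L π`.
-/

open Nat in
theorem Real.hasSum_pow_div_factorial (x : ℝ) : HasSum (fun n ↦ x ^ n / n !) (Real.exp x) := by
  rw [Real.exp_eq_exp_ℝ]
  exact NormedSpace.expSeries_div_hasSum_exp x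

section PoissonExpansion

variable {α : Type*} [MeasurableSpace α] (μ : Measure α) [SigmaFinite μ] (f : α → ℝ) (c : ℝ)

theorem integral_pi_pow_mul_prod (m : ℕ) :
    ∫ x : Fin m → α, c ^ m * ∏ i, f (x i) ∂(Measure.pi fun _ ↦ μ) = (c * ∫ x, f x ∂μ) ^ m := by
  rw [integral_const_mul, integral_fintype_prod_eq_pow, Fintype.card_fin, mul_pow]

theorem hasSum_inv_factorial_mul_integral_pi_pow_mul_prod :
    HasSum (fun m : ℕ ↦ (1 / m.factorial : ℝ) *
        ∫ x : Fin m → α, c ^ m * ∏ i, f (x i) ∂(Measure.pi fun _ ↦ μ))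
      (Real.exp (c * ∫ x, f x ∂μ)) := by
  simpa only [integral_pi_pow_mul_prod, one_div_mul_eq_div] using
    Real.hasSum_pow_div_factorial (c * ∫ x, f x ∂μ)

end PoissonExpansion

theorem tbd_phd_posterior_poisson_general
    {α : Type*} [MeasurableSpace α] (μ : Measure α) [SigmaFinite μ]
    (p L : α → ℝ)
    (l : ℝ)
    (a : ℝ) (ha : a = l * ∫ x, L x * p x ∂μ)
    (w : (n : ℕ) → (Fin n → α) → ℝ)
    (hw : ∀ n (x : Fin n → α), w n x = Real.exp (-l) * l ^ n * ∏ i, L (x i) * p (x i))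
    (Z : ℝ)
    (hZ : Z = ∑' m : ℕ, (1 / m.factorial : ℝ) *
        ∫ x : Fin m → α, w m x ∂(Measure.pi fun _ : Fin m => μ)) :
    ∀ (n : ℕ) (x : Fin n → α),
      w n x / Z = Real.exp (-a) * ∏ i, l * L (x i) * p (x i) := by
  have hZ_eq : Z = Real.exp (-l) * Real.exp a := by
    have hw_int : ∀ m : ℕ, ∫ x : Fin m → α, w m x ∂(Measure.pi fun _ ↦ μ) =
        Real.exp (-l) * ∫ x : Fin m → α, l ^ m * ∏ i, L (x i) * p (x i)
          ∂(Measure.pi fun _ ↦ μ) := by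
      intro m
      simp only [hw, mul_assoc, integral_const_mul]
    simp only [hZ, hw_int, mul_left_comm _ (Real.exp (-l)), tsum_mul_left, ha,
      (hasSum_inv_factorial_mul_integral_pi_pow_mul_prod μ (fun x ↦ L x * p x) l).tsum_eq]
  intro n x
  rw [hw, hZ_eq, Real.exp_neg a]
  simp only [Finset.prod_mul_distrib, Finset.prod_const, Finset.card_univ, Fintype.card_fin]
  field_simp

/-- **Poisson conjugacy of the full posterior multi-target density.**
With the unnormalized posterior weights
`w_n(x₁,…,x_n) = exp(−λ) · λ^n · ∏_i L(x_i)·π(x_i)` and evidence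
`Z = Σ_{m≥0} (1/m!) ∫_{α^m} w_m dμ^m`, for every `n ∈ ℕ` and every
`(x₁,…,x_n) ∈ α^n` one has
`w_n(x₁,…,x_n)/Z = exp(−a) · ∏_{i=1}^{n} ( λ · L(x_i) · π(x_i) )`,
where `a = λ ∫ L·π dμ`.  That is, the normalized posterior multi-target density is
exactly the density of a Poisson random finite set with intensity
`x ↦ L(x)·λ·π(x)`: the posterior is again Poisson with intensity `L·v`. -/
theorem tbd_phd_posterior_poisson
    {α : Type*} [MeasurableSpace α] (μ : Measure α) [SigmaFinite μ]
    (p L : α → ℝ) (hp_meas : Measurable p) (hL_meas : Measurable L)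
    (hp_nn : ∀ x, 0 ≤ p x) (hL_nn : ∀ x, 0 ≤ L x)
    (hp_dens : ∫ x, p x ∂μ = 1)
    (l : ℝ) (hl : 0 ≤ l)
    (hLp_int : Integrable (fun x => L x * p x) μ)
    (a : ℝ) (ha : a = l * ∫ x, L x * p x ∂μ)
    (w : (n : ℕ) → (Fin n → α) → ℝ)
    (hw : ∀ n (x : Fin n → α), w n x = Real.exp (-l) * l ^ n * ∏ i, L (x i) * p (x i))
    (Z : ℝ)
    (hZ : Z = ∑' m : ℕ, (1 / m.factorial : ℝ) *
        ∫ x : Fin m → α, w m x ∂(Measure.pi fun _ : Fin m => μ)) :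
    ∀ (n : ℕ) (x : Fin n → α),
      w n x / Z = Real.exp (-a) * ∏ i, l * L (x i) * p (x i) :=
  tbd_phd_posterior_poisson_general μ p L l a ha w hw Z hZ
end
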